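/- arXiv:1904.08891 — 5 statements merged into one kernel-verified Lean document; each statement's English description precedes it below -/
import Mathlib

section
/- For every real y ≥ 0, the inequalities (1 - e^{-y/2})² ≤ 1 - (1+y)·e^{-y} ≤ 2·(1 - e^{-y/2})² hold. -/
/-!
Substitute `t = e^{-y/2} ∈ (0, 1]`, so that `y = -2 log t` and `e^{-y} = t²`. The lower bound
becomes `-log t ≤ 1/t - 1`, and the upper bound becomes `(1 - t)(3t - 1) ≤ -2 t² log t`, which
follows from the sharper estimate `-log t ≥ 2(1 - t)/(1 + t)` because
`4t² - (3t - 1)(1 + t) = (1 - t)²`. That estimate is the first term of the series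
`log (1 + x) - log (1 - x) = 2 ∑ x^{2k+1}/(2k+1)` at `x = (1 - t)/(1 + t)`.
-/

open Real

lemma two_mul_le_log_one_add_sub_log_one_sub {x : ℝ} (hx₀ : 0 ≤ x) (hx₁ : x < 1) :
    2 * x ≤ log (1 + x) - log (1 - x) := by
  have hsum := hasSum_log_sub_log_of_abs_lt_one (abs_lt.2 ⟨by linarith, hx₁⟩)
  simpa using le_hasSum hsum 0 fun k _ => by positivity

lemma two_mul_one_sub_div_one_add_le_neg_log {t : ℝ} (ht₀ : 0 < t) (ht₁ : t ≤ 1) :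
    2 * ((1 - t) / (1 + t)) ≤ -log t := by
  set x := (1 - t) / (1 + t) with hx
  have hx₀ : 0 ≤ x := div_nonneg (by linarith) (by linarith)
  have hx₁ : x < 1 := (div_lt_one (by linarith)).2 (by linarith)
  have hratio : (1 + x) / (1 - x) = t⁻¹ := by
    rw [hx]
    field_simp [ht₀.ne']
    ring
  calc 2 * x ≤ log (1 + x) - log (1 - x) := two_mul_le_log_one_add_sub_log_one_sub hx₀ hx₁
    _ = log ((1 + x) / (1 - x)) := (log_div (by linarith) (by linarith)).symm
    _ = -log t := by rw [hratio, log_inv]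

/-- For all `y ≥ 0`: `(1 - e^{-y/2})² ≤ 1 - (1+y)·e^{-y} ≤ 2·(1 - e^{-y/2})²`. -/
theorem stmt3 (y : ℝ) (hy : 0 ≤ y) :
    (1 - Real.exp (-(y / 2))) ^ 2 ≤ 1 - (1 + y) * Real.exp (-y) ∧
    1 - (1 + y) * Real.exp (-y) ≤ 2 * (1 - Real.exp (-(y / 2))) ^ 2 := by
  set t := exp (-(y / 2)) with ht
  have ht₀ : 0 < t := exp_pos _
  have ht₁ : t ≤ 1 := exp_le_one_iff.2 (by linarith)
  have hy_log : y = -2 * log t := by rw [ht, log_exp]; ring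
  have hexp : exp (-y) = t ^ 2 := by rw [ht, ← exp_nat_mul]; push_cast; ring_nf
  have hlower : 1 - t⁻¹ ≤ log t := one_sub_inv_le_log_of_pos ht₀
  have hupper := two_mul_one_sub_div_one_add_le_neg_log ht₀ ht₁
  rw [hexp, hy_log]
  constructor
  · have hinv : t * (1 - t⁻¹) = t - 1 := by field_simp
    nlinarith [mul_le_mul_of_nonneg_left hlower (mul_nonneg ht₀.le ht₀.le)]
  · have hdiv : (1 + t) * ((1 - t) / (1 + t)) = 1 - t := by field_simp
    have hweight : 0 ≤ t ^ 2 * (1 + t) := by positivity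
    nlinarith [mul_le_mul_of_nonneg_left hupper hweight,
      pow_nonneg (sub_nonneg.2 ht₁) 3]
end

section
/- For 0 < p < 1 and t ≥ 0 with p(1+t) ≤ 1, the binary relative entropy satisfies H(p(1+t) | p) ≥ p·t²/(2+t), where H(x|p) = x·log(x/p) + (1-x)·log((1-x)/(1-p)). -/
/-! Bound the first term of `H` with `log (1 + t) ≥ 2t/(2 + t)` and the second with
`a log (a/b) ≥ a - b`; the two lower bounds add up exactly to `p t²/(2 + t)`. -/

open Real

lemma sub_le_mul_log_div {a b : ℝ} (ha : 0 ≤ a) (hb : 0 < b) : a - b ≤ a * log (a / b) := by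
  have h := mul_le_mul_of_nonneg_left (self_sub_one_le_mul_log (div_nonneg ha hb.le)) hb.le
  calc a - b = b * (a / b - 1) := by field_simp
    _ ≤ b * (a / b * log (a / b)) := h
    _ = a * log (a / b) := by field_simp

/-- For `0 < p < 1`, `t ≥ 0` with `p(1+t) ≤ 1`, the binary relative entropy satisfies
`H(p(1+t)|p) ≥ p·t²/(2+t)`. -/
theorem stmt5 (p t : ℝ) (hp0 : 0 < p) (hp1 : p < 1) (ht : 0 ≤ t) (hpt : p * (1 + t) ≤ 1) :
    p * t ^ 2 / (2 + t) ≤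
      p * (1 + t) * Real.log ((p * (1 + t)) / p)
        + (1 - p * (1 + t)) * Real.log ((1 - p * (1 + t)) / (1 - p)) := by
  rw [mul_div_cancel_left₀ _ hp0.ne']
  have hfirst : p * (1 + t) * (2 * t / (t + 2)) ≤ p * (1 + t) * log (1 + t) :=
    mul_le_mul_of_nonneg_left (le_log_one_add_of_nonneg ht) (by positivity)
  have hsecond := sub_le_mul_log_div (sub_nonneg.2 hpt) (sub_pos.2 hp1)
  have hsplit : p * t ^ 2 / (2 + t)
      = p * (1 + t) * (2 * t / (t + 2)) + ((1 - p * (1 + t)) - (1 - p)) := by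
    field_simp
    ring
  linarith
end

section
/- Let 0 ≤ p ≤ 1 and let ℓ ≥ 2 be an even integer. Then P(Bin(ℓ,p) < ℓ/2) + (1/2)·P(Bin(ℓ,p) = ℓ/2) = P(Bin(ℓ-1,p) < (ℓ-1)/2). -/
/-!
Write `ℓ = 2n + 2` and `B(N, k) = C(N, k) pᵏ q^(N-k)` with `q = 1 - p`. Pascal's rule
`B(N+1, k) = q B(N, k) + p B(N, k-1)` turns `∑_{k ≤ n} B(2n+2, k)` into
`q ∑_{k ≤ n} B(2n+1, k) + p ∑_{k < n} B(2n+1, k)`. The term `p B(2n+1, n)` missing from the second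
sum is half the central term, because `C(2n+2, n+1) = 2 C(2n+1, n)`, and `p + q = 1` finishes.
-/

open Finset

lemma sum_range_ite_eq_sum_range {M : Type*} [AddCommMonoid M] {N m : ℕ} (hm : m ≤ N)
    (P : ℕ → Prop) [DecidablePred P] (hP : ∀ k < N, P k ↔ k < m) (f : ℕ → M) :
    ∑ k ∈ range N, (if P k then f k else 0) = ∑ k ∈ range m, f k := by
  rw [← sum_filter]
  congr 1
  ext k
  simp only [mem_filter, mem_range]
  constructor
  · rintro ⟨hk, hPk⟩
    exact (hP k hk).1 hPk
  · intro hk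
    exact ⟨hk.trans_le hm, (hP k (hk.trans_le hm)).2 hk⟩

section BinomTerm

variable {R : Type*} [CommSemiring R]

def binomTerm (p q : R) (n k : ℕ) : R := n.choose k * p ^ k * q ^ (n - k)

variable (p q : R)

lemma binomTerm_succ_zero (N : ℕ) : binomTerm p q (N + 1) 0 = q * binomTerm p q N 0 := by
  simp only [binomTerm, Nat.choose_zero_right, Nat.sub_zero, pow_succ]
  ring

lemma binomTerm_succ_succ (N k : ℕ) :
    binomTerm p q (N + 1) (k + 1) = q * binomTerm p q N (k + 1) + p * binomTerm p q N k := by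
  simp only [binomTerm, Nat.choose_succ_succ', Nat.add_sub_add_right, Nat.cast_add]
  rcases lt_or_ge k N with hk | hk
  · rw [show N - k = N - (k + 1) + 1 by omega]
    ring
  · -- the truncated exponent `N - (k + 1)` only multiplies `N.choose (k + 1) = 0`
    rw [Nat.choose_eq_zero_of_lt (Nat.lt_succ_of_le hk)]
    ring

lemma sum_range_binomTerm_succ (N m : ℕ) :
    ∑ k ∈ range (m + 1), binomTerm p q (N + 1) k
      = q * ∑ k ∈ range (m + 1), binomTerm p q N k + p * ∑ k ∈ range m, binomTerm p q N k := by
  simp only [sum_range_succ' _ m, binomTerm_succ_succ, binomTerm_succ_zero, sum_add_distrib,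
    mul_add, mul_sum]
  ring

end BinomTerm

lemma sum_range_binomTerm_even_add_central {R : Type*} [CommRing R] {p q : R} (hpq : p + q = 1)
    (n : ℕ) :
    ∑ k ∈ range (n + 1), binomTerm p q (2 * n + 1 + 1) k
        + (2 * n + 1).choose n * p ^ (n + 1) * q ^ (n + 1)
      = ∑ k ∈ range (n + 1), binomTerm p q (2 * n + 1) k := by
  rw [sum_range_binomTerm_succ, sum_range_succ, binomTerm, show 2 * n + 1 - n = n + 1 by omega]
  linear_combination
    (∑ k ∈ range n, binomTerm p q (2 * n + 1) k + (2 * n + 1).choose n * p ^ n * q ^ (n + 1)) * hpq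

theorem stmt12_general (p : ℝ) (ℓ : ℕ) (hℓ : Even ℓ) (hℓ2 : 2 ≤ ℓ) :
    (∑ k ∈ Finset.range (ℓ + 1),
        (if (k : ℝ) < (ℓ : ℝ) / 2 then (ℓ.choose k : ℝ) * p ^ k * (1 - p) ^ (ℓ - k) else 0))
      + (1 / 2) * ((ℓ.choose (ℓ / 2) : ℝ) * p ^ (ℓ / 2) * (1 - p) ^ (ℓ - ℓ / 2))
    = ∑ k ∈ Finset.range ℓ,
        (if (k : ℝ) < ((ℓ : ℝ) - 1) / 2 then
          ((ℓ - 1).choose k : ℝ) * p ^ k * (1 - p) ^ (ℓ - 1 - k) else 0) := by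
  obtain ⟨n, rfl⟩ : ∃ n, ℓ = 2 * n + 1 + 1 := by
    obtain ⟨m, rfl⟩ := hℓ
    exact ⟨m - 1, by omega⟩
  have hbelow_half : ∀ k < 2 * n + 1 + 1 + 1,
      ((k : ℝ) < ((2 * n + 1 + 1 : ℕ) : ℝ) / 2 ↔ k < n + 1) := by
    intro k _
    rw [lt_div_iff₀ two_pos]
    norm_cast
    omega
  have hbelow_half_pred : ∀ k < 2 * n + 1 + 1,
      ((k : ℝ) < (((2 * n + 1 + 1 : ℕ) : ℝ) - 1) / 2 ↔ k < n + 1) := by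
    intro k _
    rw [show (((2 * n + 1 + 1 : ℕ) : ℝ) - 1) / 2 = ((2 * n + 1 : ℕ) : ℝ) / 2 by push_cast; ring,
      lt_div_iff₀ two_pos]
    norm_cast
    omega
  have hcentral : ((2 * n + 1 + 1).choose (n + 1) : ℝ) = 2 * (2 * n + 1).choose n := by
    rw [Nat.choose_succ_succ', Nat.choose_symm_half]
    push_cast
    ring
  rw [sum_range_ite_eq_sum_range (by omega) _ hbelow_half,
    sum_range_ite_eq_sum_range (by omega) _ hbelow_half_pred,
    show (2 * n + 1 + 1) / 2 = n + 1 by omega, show 2 * n + 1 + 1 - (n + 1) = n + 1 by omega,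
    Nat.add_sub_cancel, hcentral]
  have key := sum_range_binomTerm_even_add_central (add_sub_cancel p 1) n
  simp only [binomTerm] at key
  linear_combination key

/-- Even-case recursion: for `0 ≤ p ≤ 1` and even `ℓ ≥ 2`,
`P(Bin(ℓ,p) < ℓ/2) + (1/2)·P(Bin(ℓ,p) = ℓ/2) = P(Bin(ℓ-1,p) < (ℓ-1)/2)`. -/
theorem stmt12 (p : ℝ) (hp0 : 0 ≤ p) (hp1 : p ≤ 1) (ℓ : ℕ) (hℓ : Even ℓ) (hℓ2 : 2 ≤ ℓ) :
    (∑ k ∈ Finset.range (ℓ + 1),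
        (if (k : ℝ) < (ℓ : ℝ) / 2 then (ℓ.choose k : ℝ) * p ^ k * (1 - p) ^ (ℓ - k) else 0))
      + (1 / 2) * ((ℓ.choose (ℓ / 2) : ℝ) * p ^ (ℓ / 2) * (1 - p) ^ (ℓ - ℓ / 2))
    = ∑ k ∈ Finset.range ℓ,
        (if (k : ℝ) < ((ℓ : ℝ) - 1) / 2 then
          ((ℓ - 1).choose k : ℝ) * p ^ k * (1 - p) ^ (ℓ - 1 - k) else 0) :=
  stmt12_general p ℓ hℓ hℓ2
end

section
/- Let 0 ≤ p ≤ 1/2 and ℓ ≥ 0 an integer. Then P(Bin(ℓ+2,p) < (ℓ+2)/2) ≥ P(Bin(ℓ,p) < ℓ/2). -/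
/-!
Write `F(n, t) = P(Bin(n, p) < t)` (`lowerTail`) and `b(n, k) = P(Bin(n, p) = k)` (`prob`).
Conditioning on the last two trials gives
`F(n + 2, t + 1) = F(n, t) + (1 - p)² b(n, t) - p² b(n, t - 1)`, and for `2t ≤ n + 1` the
increment is nonnegative because `C(n, t - 1) ≤ C(n, t)` and `p ≤ 1 - p`.
With `t = ⌈ℓ/2⌉` this is the theorem.
-/

open Finset

noncomputable section

namespace Binomial

def prob (p : ℝ) (n k : ℕ) : ℝ :=
  (n.choose k : ℝ) * p ^ k * (1 - p) ^ (n - k)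

def lowerTail (p : ℝ) (n t : ℕ) : ℝ :=
  ∑ k ∈ range t, prob p n k

lemma lowerTail_succ (p : ℝ) (n t : ℕ) :
    lowerTail p n (t + 1) = lowerTail p n t + prob p n t :=
  sum_range_succ _ _

lemma lowerTail_nonneg {p : ℝ} (hp0 : 0 ≤ p) (hp1 : p ≤ 1) (n t : ℕ) :
    0 ≤ lowerTail p n t := by
  have hq : 0 ≤ 1 - p := by linarith
  exact sum_nonneg fun _ _ => by unfold prob; positivity

/-- Conditioning on the last trial. -/
lemma lowerTail_succ_succ (p : ℝ) (n t : ℕ) :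
    lowerTail p (n + 1) (t + 1) = (1 - p) * lowerTail p n (t + 1) + p * lowerTail p n t := by
  induction t with
  | zero =>
    simp only [lowerTail, zero_add, range_one, prob, sum_singleton, Nat.choose_zero_right,
      Nat.cast_one, pow_zero, mul_one, tsub_zero, pow_succ, one_mul, range_zero, sum_empty,
      mul_zero, add_zero]
    ring
  | succ t ih =>
    rw [lowerTail_succ p (n + 1), ih, lowerTail_succ p n (t + 1), lowerTail_succ p n t]
    unfold prob
    rw [Nat.choose_succ_succ, Nat.cast_add, Nat.add_sub_add_right]
    rcases le_or_gt (t + 1) n with h | h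
    · rw [show n - t = n - (t + 1) + 1 by omega]; ring
    · rw [Nat.choose_eq_zero_of_lt h]; push_cast; ring

lemma lowerTail_add_two (p : ℝ) (n t : ℕ) :
    lowerTail p (n + 2) (t + 2) =
      lowerTail p n (t + 1) + ((1 - p) ^ 2 * prob p n (t + 1) - p ^ 2 * prob p n t) := by
  rw [lowerTail_succ_succ p (n + 1), lowerTail_succ_succ p n, lowerTail_succ_succ p n t,
    lowerTail_succ p n (t + 1), lowerTail_succ p n t]
  ring

lemma sq_mul_prob_le {p : ℝ} (hp0 : 0 ≤ p) (hp : p ≤ 1 / 2) {n k : ℕ} (hk : 2 * k + 1 ≤ n) :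
    p ^ 2 * prob p n k ≤ (1 - p) ^ 2 * prob p n (k + 1) := by
  have hchoose : (n.choose k : ℝ) ≤ n.choose (k + 1) := by
    have h : n.choose k * (k + 1) ≤ n.choose (k + 1) * (k + 1) := by
      rw [Nat.choose_succ_right_eq]; exact Nat.mul_le_mul_left _ (by omega)
    exact_mod_cast Nat.le_of_mul_le_mul_right h k.succ_pos
  have hq : 0 ≤ 1 - p := by linarith
  calc p ^ 2 * prob p n k
      = ((n.choose k : ℝ) * p) * (p ^ (k + 1) * (1 - p) ^ (n - (k + 1) + 1)) := by
        rw [prob, show n - k = n - (k + 1) + 1 by omega]; ring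
    _ ≤ ((n.choose (k + 1) : ℝ) * (1 - p)) * (p ^ (k + 1) * (1 - p) ^ (n - (k + 1) + 1)) := by
        gcongr; linarith
    _ = (1 - p) ^ 2 * prob p n (k + 1) := by rw [prob]; ring

lemma lowerTail_le_lowerTail_add_two {p : ℝ} (hp0 : 0 ≤ p) (hp : p ≤ 1 / 2) {n t : ℕ}
    (ht : 2 * t ≤ n + 1) : lowerTail p n t ≤ lowerTail p (n + 2) (t + 1) := by
  cases t with
  | zero => exact (sum_range_zero _).trans_le (lowerTail_nonneg hp0 (by linarith) (n + 2) 1)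
  | succ s =>
    rw [lowerTail_add_two]
    linarith [sq_mul_prob_le hp0 hp (show 2 * s + 1 ≤ n by omega)]

end Binomial

end

lemma sum_range_ite_lt_half (n : ℕ) (f : ℕ → ℝ) :
    ∑ k ∈ range (n + 1), (if (k : ℝ) < (n : ℝ) / 2 then f k else 0) =
      ∑ k ∈ range ((n + 1) / 2), f k := by
  rw [← sum_filter]
  congr 1
  ext k
  have : (k : ℝ) < n / 2 ↔ 2 * k < n := by
    rw [lt_div_iff₀ two_pos, mul_comm]; exact_mod_cast Iff.rfl
  simp only [mem_filter, mem_range, this]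
  omega

open Binomial in
/-- For `0 ≤ p ≤ 1/2` and `ℓ ≥ 0`,
`P(Bin(ℓ+2,p) < (ℓ+2)/2) ≥ P(Bin(ℓ,p) < ℓ/2)`. -/
theorem stmt14 (p : ℝ) (hp0 : 0 ≤ p) (hp : p ≤ 1 / 2) (ℓ : ℕ) :
    ∑ k ∈ Finset.range (ℓ + 1),
        (if (k : ℝ) < (ℓ : ℝ) / 2 then (ℓ.choose k : ℝ) * p ^ k * (1 - p) ^ (ℓ - k) else 0)
    ≤ ∑ k ∈ Finset.range (ℓ + 3),
        (if (k : ℝ) < ((ℓ : ℝ) + 2) / 2 then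
          ((ℓ + 2).choose k : ℝ) * p ^ k * (1 - p) ^ (ℓ + 2 - k) else 0) := by
  have hcast : ((ℓ : ℝ) + 2) / 2 = ((ℓ + 2 : ℕ) : ℝ) / 2 := by push_cast; rfl
  rw [hcast, sum_range_ite_lt_half ℓ, sum_range_ite_lt_half (ℓ + 2),
    show (ℓ + 2 + 1) / 2 = (ℓ + 1) / 2 + 1 by omega]
  exact lowerTail_le_lowerTail_add_two hp0 hp (by omega)
end

section
/- Let y ∈ ℝ and S₀, S₁ > 0. The 4×4 real matrix M with rows (0, S₀, S₁, 0), (S₀, 0, 0, S₁), (S₁·e^{-y}, 0, 0, S₀), (0, S₁·e^{-y}, S₀, 0) has λ = S₀ + S₁·e^{-y/2} as an eigenvalue, with eigenvector (e^{y/2}, e^{y/2}, 1, 1). Moreover λ is the largest eigenvalue of M. -/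
/-!
The vector `v = (e^{-y/2}, e^{-y/2}, 1, 1)` is a positive left eigenvector of `M` for `λ`. For an
eigenpair `M w = μ w`, the triangle inequality gives `|μ| |w| ≤ M |w|` entrywise; pairing with `v`
yields `|μ| ⟪v, |w|⟫ ≤ ⟪vᵀ M, |w|⟫ = λ ⟪v, |w|⟫`, and `⟪v, |w|⟫ > 0` since `w ≠ 0`.
-/

open Matrix

section CollatzWielandt

variable {n : Type*} [Fintype n] {A : Matrix n n ℝ}

theorem norm_mul_norm_le_sum_of_mulVec_eq (hA : ∀ i j, 0 ≤ A i j) {μ : ℂ} {w : n → ℂ}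
    (h : A.map ((↑) : ℝ → ℂ) *ᵥ w = μ • w) (i : n) :
    ‖μ‖ * ‖w i‖ ≤ ∑ j, A i j * ‖w j‖ := by
  have hi : μ * w i = ∑ j, (A i j : ℂ) * w j := by
    simpa [mulVec, dotProduct] using (congrFun h i).symm
  calc ‖μ‖ * ‖w i‖ = ‖∑ j, (A i j : ℂ) * w j‖ := by rw [← norm_mul, hi]
    _ ≤ ∑ j, ‖(A i j : ℂ) * w j‖ := norm_sum_le _ _
    _ = ∑ j, A i j * ‖w j‖ := by
        simp only [norm_mul, Complex.norm_real, Real.norm_of_nonneg (hA _ _)]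

theorem norm_le_of_vecMul_le (hA : ∀ i j, 0 ≤ A i j) {v : n → ℝ} (hv : ∀ i, 0 < v i) {r : ℝ}
    (hvA : ∀ j, (v ᵥ* A) j ≤ r * v j) {μ : ℂ} {w : n → ℂ} (hw : w ≠ 0)
    (h : A.map ((↑) : ℝ → ℂ) *ᵥ w = μ • w) : ‖μ‖ ≤ r := by
  have hpos : 0 < ∑ i, v i * ‖w i‖ := by
    obtain ⟨i, hi⟩ := Function.ne_iff.mp hw
    exact Finset.sum_pos' (fun j _ => mul_nonneg (hv j).le (norm_nonneg _))
      ⟨i, Finset.mem_univ _, mul_pos (hv i) (norm_pos_iff.mpr hi)⟩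
  refine le_of_mul_le_mul_right ?_ hpos
  calc ‖μ‖ * ∑ i, v i * ‖w i‖ = ∑ i, v i * (‖μ‖ * ‖w i‖) := by
        rw [Finset.mul_sum]; congr 1; ext i; ring
    _ ≤ ∑ i, v i * ∑ j, A i j * ‖w j‖ := by
        gcongr with i
        · exact (hv i).le
        · exact norm_mul_norm_le_sum_of_mulVec_eq hA h i
    _ = ∑ j, (v ᵥ* A) j * ‖w j‖ := by
        simp only [vecMul, dotProduct, Finset.mul_sum, Finset.sum_mul]
        rw [Finset.sum_comm]; simp only [mul_assoc]
    _ ≤ ∑ j, r * v j * ‖w j‖ := by gcongr with j; exact hvA j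
    _ = r * ∑ i, v i * ‖w i‖ := by rw [Finset.mul_sum]; simp only [mul_assoc]

end CollatzWielandt

section GardnerMatrix

variable (y S0 S1 : ℝ)

noncomputable def gardnerMatrix : Matrix (Fin 4) (Fin 4) ℝ :=
  !![0, S0, S1, 0;
     S0, 0, 0, S1;
     S1 * Real.exp (-y), 0, 0, S0;
     0, S1 * Real.exp (-y), S0, 0]

theorem gardnerMatrix_nonneg (hS0 : 0 ≤ S0) (hS1 : 0 ≤ S1) (i j : Fin 4) :
    0 ≤ gardnerMatrix y S0 S1 i j := by
  fin_cases i <;> fin_cases j <;> simp [gardnerMatrix] <;> positivity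

theorem exp_neg_mul_exp_half : Real.exp (-y) * Real.exp (y / 2) = Real.exp (-(y / 2)) := by
  rw [← Real.exp_add]; ring_nf

theorem exp_neg_half_mul_exp_half : Real.exp (-(y / 2)) * Real.exp (y / 2) = 1 := by
  rw [← Real.exp_add]; simp

theorem exp_neg_eq_exp_neg_half_sq : Real.exp (-y) = Real.exp (-(y / 2)) * Real.exp (-(y / 2)) := by
  rw [← Real.exp_add]; ring_nf

theorem gardnerMatrix_mulVec :
    gardnerMatrix y S0 S1 *ᵥ ![Real.exp (y / 2), Real.exp (y / 2), 1, 1]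
      = (S0 + S1 * Real.exp (-(y / 2))) • ![Real.exp (y / 2), Real.exp (y / 2), 1, 1] := by
  have h₁ := exp_neg_mul_exp_half y
  have h₂ := exp_neg_half_mul_exp_half y
  ext i
  fin_cases i <;> simp [gardnerMatrix, mulVec, dotProduct, Fin.sum_univ_four]
  · linear_combination -S1 * h₂
  · linear_combination -S1 * h₂
  · linear_combination S1 * h₁
  · linear_combination S1 * h₁

theorem vecMul_gardnerMatrix :
    ![Real.exp (-(y / 2)), Real.exp (-(y / 2)), 1, 1] ᵥ* gardnerMatrix y S0 S1
      = (S0 + S1 * Real.exp (-(y / 2))) • ![Real.exp (-(y / 2)), Real.exp (-(y / 2)), 1, 1] := by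
  have h := exp_neg_eq_exp_neg_half_sq y
  ext j
  fin_cases j <;> simp [gardnerMatrix, vecMul, dotProduct, Fin.sum_univ_four]
  · linear_combination S1 * h
  · linear_combination S1 * h
  · ring
  · ring

end GardnerMatrix

/-- The 4×4 stability matrix with rows `(0,S₀,S₁,0)`, `(S₀,0,0,S₁)`,
`(S₁e^{-y},0,0,S₀)`, `(0,S₁e^{-y},S₀,0)` has `λ = S₀ + S₁e^{-y/2}` as an eigenvalue
with eigenvector `(e^{y/2}, e^{y/2}, 1, 1)`, and `λ` is its largest eigenvalue. -/
theorem stmt15 (y S0 S1 : ℝ) (hS0 : 0 < S0) (hS1 : 0 < S1) :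
    (Matrix.mulVec
        (!![0, S0, S1, 0;
            S0, 0, 0, S1;
            S1 * Real.exp (-y), 0, 0, S0;
            0, S1 * Real.exp (-y), S0, 0])
        ![Real.exp (y / 2), Real.exp (y / 2), 1, 1]
      = (S0 + S1 * Real.exp (-(y / 2))) • ![Real.exp (y / 2), Real.exp (y / 2), 1, 1]) ∧
    (∀ (μ : ℂ) (w : Fin 4 → ℂ), w ≠ 0 →
      Matrix.mulVec
          ((!![0, S0, S1, 0;
              S0, 0, 0, S1;
              S1 * Real.exp (-y), 0, 0, S0;
              0, S1 * Real.exp (-y), S0, 0]).map ((↑) : ℝ → ℂ)) w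
        = μ • w →
      ‖μ‖ ≤ S0 + S1 * Real.exp (-(y / 2))) := by
  refine ⟨gardnerMatrix_mulVec y S0 S1, fun μ w hw h => ?_⟩
  have hv : ∀ i, 0 < ![Real.exp (-(y / 2)), Real.exp (-(y / 2)), 1, 1] i := by
    intro i; fin_cases i <;> simp [Real.exp_pos]
  refine norm_le_of_vecMul_le (A := gardnerMatrix y S0 S1)
    (gardnerMatrix_nonneg y S0 S1 hS0.le hS1.le) hv (fun j => ?_) hw h
  rw [vecMul_gardnerMatrix, Pi.smul_apply, smul_eq_mul]
end
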